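/- arXiv:1705.06685 — 4 statements merged into one kernel-verified Lean document; each statement's English description precedes it below -/
import Mathlib

section
/- Let k be a field of characteristic 0 and let B be a commutative k-algebra that is an integral domain. Let t_1, …, t_s ∈ B be such that every element of B is algebraic over the k-subalgebra of B generated by t_1, …, t_s, and suppose D_1, …, D_s are k-linear derivations of B with D_i(t_j) = δ_{ij} (Kronecker delta) for all i, j. Then: (a) every k-linear derivation d of B satisfies d = Σ_{i=1}^{s} d(t_i)·D_i (a B-linear combination of derivations); and (b) if b_1, …, b_s ∈ B satisfy Σ_{i=1}^{s} b_i·D_i = 0, then b_1 = ⋯ = b_s = 0. Hence D_1, …, D_s form a basis of the B-module of k-linear derivations of B. -/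
/-!
A derivation `d` that kills the `t i` kills the subalgebra `S` they generate, so for
`p ∈ S[X]` it acts on `p(x)` only through the variable: `d (p x) = p'(x) · d x`. If `x` is
algebraic over `S` and `p` is a nonzero annihilating polynomial of least degree, then in
characteristic zero `p' ≠ 0` has smaller degree, so `p'(x) ≠ 0` and hence `d x = 0`. Thus a
derivation is determined by its values on the `t i`, which gives (a) by comparing `d` with
`∑ i, d (t i) • D i`; (b) follows by evaluating at `t j`.
-/

open Polynomial

namespace Derivation

variable {R A B : Type*} [CommRing R] [CommRing A] [CommRing B]
  [Algebra R A] [Algebra R B] [Algebra A B] [IsScalarTower R A B]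

lemma finset_sum_apply {ι : Type*} (s : Finset ι) (f : ι → Derivation R B B) (x : B) :
    (∑ i ∈ s, f i) x = ∑ i ∈ s, f i x := by
  rw [← coeFnAddMonoidHom_apply, map_sum, Finset.sum_apply]
  rfl

lemma apply_aeval_eq_of_apply_algebraMap_eq_zero (d : Derivation R B B)
    (hd : ∀ a : A, d (algebraMap A B a) = 0) (x : B) (p : A[X]) :
    d (aeval x p) = aeval x (derivative p) * d x := by
  have hcoeffs : (d.compAlgebraMap A).mapCoeffs p = 0 := by
    ext i
    exact hd (p.coeff i)
  rw [apply_aeval_eq, hcoeffs, map_zero, map_zero, zero_add, smul_eq_mul]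

lemma apply_eq_zero_of_isAlgebraic [IsDomain B] [IsAddTorsionFree B] [FaithfulSMul A B]
    (d : Derivation R B B) (hd : ∀ a : A, d (algebraMap A B a) = 0) {x : B}
    (hx : IsAlgebraic A x) : d x = 0 := by
  have : IsAddTorsionFree A :=
    (FaithfulSMul.algebraMap_injective A B).isAddTorsionFree (algebraMap A B).toAddMonoidHom
  by_contra hdx
  obtain ⟨p, hp, hpx⟩ := hx
  induction hn : p.natDegree using Nat.strong_induction_on generalizing p with
  | _ n ih =>
    have hdeg : p.natDegree ≠ 0 :=
      (natDegree_pos_of_aeval_root hp hpx fun _ ↦ FaithfulSMul.algebraMap_eq_zero_iff _ _ |>.mp).ne'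
    have hp'x : aeval x (derivative p) = 0 := by
      have := d.apply_aeval_eq_of_apply_algebraMap_eq_zero hd x p
      rw [hpx, map_zero, eq_comm, mul_eq_zero] at this
      exact this.resolve_right hdx
    exact ih _ (hn ▸ natDegree_derivative_lt hdeg) _ (derivative_ne_zero.mpr hdeg) hp'x rfl

lemma eq_zero_of_isAlgebraic_adjoin [IsDomain B] [IsAddTorsionFree B] {s : Set B}
    (halg : ∀ x : B, IsAlgebraic (Algebra.adjoin R s) x) (d : Derivation R B B)
    (hd : ∀ x ∈ s, d x = 0) : d = 0 := by
  have hadjoin : ∀ a : Algebra.adjoin R s, d (algebraMap _ B a) = 0 := fun a ↦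
    eqOn_adjoin (D2 := 0) hd a.2
  ext x
  exact apply_eq_zero_of_isAlgebraic d hadjoin (halg x)

end Derivation

/-- Let `B` be a commutative domain over a field `k` of characteristic zero such that every
element of `B` is algebraic over the `k`-subalgebra generated by `t 1, …, t s`, and suppose
`D 1, …, D s` are `k`-linear derivations of `B` with `D i (t j) = δ_{ij}`.  Then every
`k`-linear derivation `d` of `B` equals `∑ i, d (t i) • D i`, and the `D i` are linearly
independent over `B`; hence they form a basis of the `B`-module of derivations. -/
theorem derivations_free_basis_of_chart_parameters
    (k B : Type*) [Field k] [CharZero k] [CommRing B] [IsDomain B] [Algebra k B]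
    (s : ℕ) (t : Fin s → B)
    (halg : ∀ b : B, IsAlgebraic (Algebra.adjoin k (Set.range t)) b)
    (D : Fin s → Derivation k B B)
    (hD : ∀ i j, D i (t j) = if i = j then 1 else 0) :
    (∀ d : Derivation k B B, d = ∑ i, d (t i) • D i) ∧
    (∀ b : Fin s → B, ∑ i, b i • D i = 0 → ∀ i, b i = 0) := by
  have : CharZero B := charZero_of_injective_algebraMap (algebraMap k B).injective
  have sum_smul_apply : ∀ (b : Fin s → B) j, (∑ i, b i • D i) (t j) = b j := by
    intro b j
    simp [Derivation.finset_sum_apply, hD]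
  refine ⟨fun d ↦ ?_, fun b hb j ↦ ?_⟩
  · rw [← sub_eq_zero]
    refine Derivation.eq_zero_of_isAlgebraic_adjoin halg _ ?_
    rintro _ ⟨j, rfl⟩
    rw [Derivation.sub_apply, sum_smul_apply, sub_self]
  · rw [← sum_smul_apply b j, hb, Derivation.zero_apply]
end

section
/- Let k be a field of characteristic 0 and let B be a commutative k-algebra that is an integral domain. Let t_1, …, t_s ∈ B be such that every element of B is algebraic over the k-subalgebra of B generated by t_1, …, t_s, let D_1, …, D_s be k-linear derivations of B with D_i(t_j) = δ_{ij}, and let φ : B → k be a k-algebra homomorphism. Then for every nonzero f ∈ B there exists a finite (possibly empty) composition D = D_{i_1} ∘ D_{i_2} ∘ ⋯ ∘ D_{i_r} of derivations from the set {D_1, …, D_s} such that φ(D(f)) ≠ 0. -/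
/-!
If every word in the `D i` applied to `f` vanished at `φ`, then `f` would lie in the ideal `I` of
elements all of whose iterated derivatives lie in `ker φ`. As `f ≠ 0` is algebraic over
`A = k[t]`, the ideal `I` meets `A` in some `c ≠ 0`, say `c = G(t)`. Since `D i (t j) = δᵢⱼ`, the
derivations act on `G(t)` as the partial derivatives act on `G`, so every iterated partial
derivative of `G` vanishes at the point `φ ∘ t`; in characteristic zero this forces `G = 0`.
-/

namespace MvPolynomial

variable {R σ : Type*}

theorem totalDegree_pderiv_lt [CommSemiring R] {i : σ} {p : MvPolynomial σ R}
    (h : pderiv i p ≠ 0) : (pderiv i p).totalDegree < p.totalDegree := by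
  classical
  have key : ∀ m ∈ (pderiv i p).support, (m.sum fun _ e => e) < p.totalDegree := by
    intro m hm
    rw [mem_support_iff, coeff_pderiv] at hm
    calc (m.sum fun _ e => e) < (m + Finsupp.single i 1).sum fun _ e => e := by
          simp [Finsupp.sum_add_index']
      _ ≤ p.totalDegree := le_totalDegree (mem_support_iff.2 (left_ne_zero_of_mul hm))
  obtain ⟨m, hm⟩ := support_nonempty.2 h
  exact (Finset.sup_lt_iff ((Nat.zero_le _).trans_lt (key m hm))).2 key

theorem eq_C_of_forall_pderiv_eq_zero [CommRing R] [IsDomain R] [CharZero R]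
    {p : MvPolynomial σ R} (h : ∀ i, pderiv i p = 0) : p = C (coeff 0 p) := by
  classical
  ext m
  rcases eq_or_ne m 0 with rfl | hm
  · simp
  obtain ⟨i, hi⟩ := Finsupp.ne_iff.1 hm
  have hle : Finsupp.single i 1 ≤ m := Finsupp.single_le_iff.2 (Nat.one_le_iff_ne_zero.2 hi)
  have := coeff_pderiv (i := i) p (m - Finsupp.single i 1)
  rw [h i, coeff_zero, tsub_add_cancel_of_le hle, eq_comm] at this
  rw [coeff_C, if_neg (Ne.symm hm)]
  exact (mul_eq_zero.1 this).resolve_right (Nat.cast_add_one_ne_zero _)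

theorem eq_zero_of_forall_eval_foldr_pderiv_eq_zero [CommRing R] [IsDomain R] [CharZero R]
    (x : σ → R) {p : MvPolynomial σ R}
    (h : ∀ l : List σ, eval x (l.foldr (fun i q => pderiv i q) p) = 0) : p = 0 := by
  induction hn : p.totalDegree using Nat.strong_induction_on generalizing p with
  | _ n ih =>
    have hderiv : ∀ i, pderiv i p = 0 := fun i => by
      by_contra hi
      refine hi (ih _ (hn ▸ totalDegree_pderiv_lt hi) (fun l => ?_) rfl)
      simpa [List.foldr_append] using h (l ++ [i])
    rw [eq_C_of_forall_pderiv_eq_zero hderiv] at h ⊢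
    simpa using h []

end MvPolynomial

namespace Derivation

open MvPolynomial

variable {R A σ : Type*} [CommSemiring R] [CommRing A] [Algebra R A]

theorem apply_aeval_of_apply_eq_ite [DecidableEq σ] (d : Derivation R A A) (x : σ → A)
    (i : σ) (hd : ∀ j, d (x j) = if i = j then 1 else 0) (p : MvPolynomial σ R) :
    d (aeval x p) = aeval x (pderiv i p) := by
  induction p using MvPolynomial.induction_on with
  | C a => simp
  | add p q hp hq => simp [hp, hq]
  | mul_X p j hp =>
    simp only [map_mul, aeval_X, leibniz, pderiv_X, hp, hd, map_add, smul_eq_mul,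
      Pi.single_apply, eq_comm (a := j)]
    split_ifs <;> simp [mul_comm]

theorem foldr_apply_aeval_of_apply_eq_ite [DecidableEq σ] (D : σ → Derivation R A A)
    (x : σ → A) (hD : ∀ i j, D i (x j) = if i = j then 1 else 0) (l : List σ)
    (p : MvPolynomial σ R) :
    l.foldr (fun i b => D i b) (aeval x p) = aeval x (l.foldr (fun i q => pderiv i q) p) := by
  induction l with
  | nil => rfl
  | cons i l ih => rw [List.foldr_cons, ih, (D i).apply_aeval_of_apply_eq_ite x i (hD i)]; rfl

theorem foldr_apply_add (D : σ → Derivation R A A) (l : List σ) (a b : A) :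
    l.foldr (fun i x => D i x) (a + b) =
      l.foldr (fun i x => D i x) a + l.foldr (fun i x => D i x) b := by
  induction l with
  | nil => rfl
  | cons i l ih => simp [ih]

end Derivation

namespace Ideal

variable {R A ι : Type*} [CommSemiring R] [CommRing A] [Algebra R A]
  (D : ι → Derivation R A A)

theorem foldr_derivation_mul_mem {J : Ideal A} {b : A}
    (hb : ∀ l : List ι, l.foldr (fun i x => D i x) b ∈ J) (l : List ι) (a : A) :
    l.foldr (fun i x => D i x) (a * b) ∈ J := by
  induction l using List.reverseRecOn generalizing a b with
  | nil => exact J.mul_mem_left a (hb [])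
  | append_singleton l i ih =>
    have hDb : ∀ l' : List ι, l'.foldr (fun i x => D i x) (D i b) ∈ J := fun l' => by
      simpa [List.foldr_append] using hb (l' ++ [i])
    simp only [List.foldr_append, List.foldr_cons, List.foldr_nil, Derivation.leibniz,
      smul_eq_mul, Derivation.foldr_apply_add]
    exact J.add_mem (ih hDb a) (mul_comm b (D i a) ▸ ih hb (D i a))

/-- The largest ideal contained in `J` and stable under every `D i`. -/
def derivationCore (J : Ideal A) : Ideal A where
  carrier := {a | ∀ l : List ι, l.foldr (fun i x => D i x) a ∈ J}
  add_mem' ha hb l := by simpa [Derivation.foldr_apply_add] using J.add_mem (ha l) (hb l)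
  zero_mem' l := by
    rw [show l.foldr (fun i x => D i x) 0 = 0 by induction l <;> simp [*]]
    exact J.zero_mem
  smul_mem' a _ hb l := foldr_derivation_mul_mem D hb l a

end Ideal

/-- Finiteness of the valuation `ν_P`: with chart parameters `t 1, …, t s` and dual
derivations `D 1, …, D s` as in the paper, and a point `P` of the variety given as a
`k`-algebra homomorphism `φ : B → k`, for every nonzero `f ∈ B` some finite composition of
the derivations `D i` applied to `f` has nonzero value at `P`. -/
theorem exists_composition_of_derivations_nonvanishing
    (k B : Type*) [Field k] [CharZero k] [CommRing B] [IsDomain B] [Algebra k B]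
    (s : ℕ) (t : Fin s → B)
    (halg : ∀ b : B, IsAlgebraic (Algebra.adjoin k (Set.range t)) b)
    (D : Fin s → Derivation k B B)
    (hD : ∀ i j, D i (t j) = if i = j then 1 else 0)
    (φ : B →ₐ[k] k)
    (f : B) (hf : f ≠ 0) :
    ∃ l : List (Fin s), φ (l.foldr (fun i b => D i b) f) ≠ 0 := by
  by_contra! hcon
  let I := Ideal.derivationCore D (RingHom.ker φ)
  have hfI : f ∈ I := hcon
  obtain ⟨c, hcI, hc0⟩ := Submodule.exists_mem_ne_zero_of_ne_bot
    (Ideal.comap_ne_bot_of_algebraic_mem hf hfI (halg f))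
  obtain ⟨p, hp⟩ : ∃ p : MvPolynomial (Fin s) k, MvPolynomial.aeval t p = (c : B) := by
    rw [← AlgHom.mem_range, ← Algebra.adjoin_range_eq_range_aeval]
    exact c.2
  have hp0 : p = 0 :=
    MvPolynomial.eq_zero_of_forall_eval_foldr_pderiv_eq_zero (fun j => φ (t j)) fun l => by
      simpa [← hp, Derivation.foldr_apply_aeval_of_apply_eq_ite D t hD,
        MvPolynomial.comp_aeval_apply, MvPolynomial.coe_aeval_eq_eval] using hcI l
  exact hc0 (Subtype.ext (by simp [← hp, hp0]))
end

section
/- Let k be a field of characteristic 0 and A = k[x,y,z]/(x²+y²+z²−1). Then there exist k-linear derivations Δ₁₂, Δ₂₃, Δ₃₁ of A satisfying Δ₁₂(x) = y, Δ₁₂(y) = −x, Δ₁₂(z) = 0; Δ₂₃(x) = 0, Δ₂₃(y) = z, Δ₂₃(z) = −y; Δ₃₁(x) = −z, Δ₃₁(y) = 0, Δ₃₁(z) = x; and every k-linear derivation of A can be written as f·Δ₁₂ + g·Δ₂₃ + h·Δ₃₁ for some f, g, h ∈ A. That is, Der_k(A) is generated as an A-module by Δ₁₂, Δ₂₃, Δ₃₁.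 -/
set_option synthInstance.maxHeartbeats 1000000
set_option maxHeartbeats 1000000

open MvPolynomial

noncomputable section

/-- The coordinate ring `A = k[x,y,z]/(x² + y² + z² - 1)` of the sphere `𝕊²`. -/
abbrev SphereRing (k : Type*) [Field k] := MvPolynomial (Fin 3) k ⧸
  Ideal.span {(X 0 ^ 2 + X 1 ^ 2 + X 2 ^ 2 - 1 : MvPolynomial (Fin 3) k)}

/-- The image of `x` in the coordinate ring of the sphere. -/
abbrev sx (k : Type*) [Field k] : SphereRing k := Ideal.Quotient.mk _ (X 0)

/-- The image of `y` in the coordinate ring of the sphere. -/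
abbrev sy (k : Type*) [Field k] : SphereRing k := Ideal.Quotient.mk _ (X 1)

/-- The image of `z` in the coordinate ring of the sphere. -/
abbrev sz (k : Type*) [Field k] : SphereRing k := Ideal.Quotient.mk _ (X 2)


section AuxSection

variable (k : Type*) [Field k]

abbrev spherePoly : MvPolynomial (Fin 3) k := X 0 ^ 2 + X 1 ^ 2 + X 2 ^ 2 - 1

abbrev smk : MvPolynomial (Fin 3) k →ₐ[k] SphereRing k :=
  Ideal.Quotient.mkₐ k _

lemma smk_surj : Function.Surjective (smk k) := Ideal.Quotient.mkₐ_surjective _ _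

lemma lift_cond (v : Fin 3 → MvPolynomial (Fin 3) k)
    (hv : mkDerivation k v (spherePoly k) = 0) :
    ∀ p, smk k p = 0 → smk k (mkDerivation k v p) = 0 := by
  intro p hp
  rw [Ideal.Quotient.mkₐ_eq_mk, Ideal.Quotient.eq_zero_iff_mem,
    Ideal.mem_span_singleton'] at hp ⊢
  obtain ⟨q, rfl⟩ := hp
  exact ⟨mkDerivation k v q, by
    rw [Derivation.leibniz, hv, smul_zero, zero_add, smul_eq_mul, mul_comm]⟩

lemma sphere_rel : (sx k) ^ 2 + (sy k) ^ 2 + (sz k) ^ 2 = 1 := by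
  have : (Ideal.Quotient.mk (Ideal.span {(X 0 ^ 2 + X 1 ^ 2 + X 2 ^ 2 - 1 :
      MvPolynomial (Fin 3) k)})) (X 0 ^ 2 + X 1 ^ 2 + X 2 ^ 2 - 1) = 0 :=
    Ideal.Quotient.eq_zero_iff_mem.mpr (Ideal.subset_span rfl)
  have h := sub_eq_zero.mp (by simpa [map_sub, map_add, map_pow, map_one] using this)
  simpa using h

lemma sphere_adjoin : Algebra.adjoin k
    ({sx k, sy k, sz k} : Set (SphereRing k)) = ⊤ := by
  have h1 : (Algebra.adjoin k (Set.range (X : Fin 3 → MvPolynomial (Fin 3) k))).map (smk k)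
      = Algebra.adjoin k ((smk k) '' Set.range X) := AlgHom.map_adjoin _ _
  rw [MvPolynomial.adjoin_range_X] at h1
  rw [← Set.range_comp] at h1
  have h2 : Algebra.adjoin k (Set.range (⇑(smk k) ∘ X)) = ⊤ := by
    rw [← h1, Algebra.map_top, AlgHom.range_eq_top]
    exact smk_surj k
  have hsub : Set.range (⇑(smk k) ∘ X) ⊆ ({sx k, sy k, sz k} : Set (SphereRing k)) := by
    rintro u ⟨i, rfl⟩
    fin_cases i
    · exact Set.mem_insert _ _
    · exact Set.mem_insert_of_mem _ (Set.mem_insert _ _)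
    · exact Set.mem_insert_of_mem _ (Set.mem_insert_of_mem _ rfl)
  exact top_unique (h2 ▸ Algebra.adjoin_mono hsub)

lemma half_cancel (t : SphereRing k) [CharZero k] (ht : (2 : SphereRing k) * t = 0) : t = 0 := by
  have h2 : (2 : SphereRing k) = algebraMap k _ 2 := by
    rw [map_ofNat]
  calc t = (algebraMap k (SphereRing k) 2⁻¹ * (2 : SphereRing k)) * t := by
            rw [h2, ← map_mul]
            norm_num
    _ = algebraMap k (SphereRing k) 2⁻¹ * ((2 : SphereRing k) * t) := by ring
    _ = 0 := by rw [ht, mul_zero]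

end AuxSection

/-- The Lie algebra of vector fields on the sphere is generated as an `A`-module by the
three derivations `Δ₁₂`, `Δ₂₃`, `Δ₃₁`. -/
theorem sphere_vector_fields_generated
    (k : Type*) [Field k] [CharZero k] :
    ∃ Δ12 Δ23 Δ31 : Derivation k (SphereRing k) (SphereRing k),
      Δ12 (sx k) = sy k ∧ Δ12 (sy k) = -(sx k) ∧ Δ12 (sz k) = 0 ∧
      Δ23 (sx k) = 0 ∧ Δ23 (sy k) = sz k ∧ Δ23 (sz k) = -(sy k) ∧
      Δ31 (sx k) = -(sz k) ∧ Δ31 (sy k) = 0 ∧ Δ31 (sz k) = sx k ∧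
      ∀ d : Derivation k (SphereRing k) (SphereRing k),
        ∃ f g h : SphereRing k, d = f • Δ12 + g • Δ23 + h • Δ31 := by
  set v12 : Fin 3 → MvPolynomial (Fin 3) k := ![X 1, -(X 0), 0] with hv12
  set v23 : Fin 3 → MvPolynomial (Fin 3) k := ![0, X 2, -(X 1)] with hv23
  set v31 : Fin 3 → MvPolynomial (Fin 3) k := ![-(X 2), 0, X 0] with hv31
  have h12 : mkDerivation k v12 (spherePoly k) = 0 := by
    simp [spherePoly, Derivation.leibniz, mkDerivation_X, hv12]; ring
  have h23 : mkDerivation k v23 (spherePoly k) = 0 := by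
    simp [spherePoly, Derivation.leibniz, mkDerivation_X, hv23]; ring
  have h31 : mkDerivation k v31 (spherePoly k) = 0 := by
    simp [spherePoly, Derivation.leibniz, mkDerivation_X, hv31]; ring
  set Δ12 := (mkDerivation k v12).liftOfSurjective (smk_surj k) (lift_cond k v12 h12) with hΔ12
  set Δ23 := (mkDerivation k v23).liftOfSurjective (smk_surj k) (lift_cond k v23 h23) with hΔ23
  set Δ31 := (mkDerivation k v31).liftOfSurjective (smk_surj k) (lift_cond k v31 h31) with hΔ31
  have app12 : ∀ p, Δ12 (smk k p) = smk k (mkDerivation k v12 p) := fun p =>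
    Derivation.liftOfSurjective_apply (smk_surj k) (lift_cond k v12 h12) p
  have app23 : ∀ p, Δ23 (smk k p) = smk k (mkDerivation k v23 p) := fun p =>
    Derivation.liftOfSurjective_apply (smk_surj k) (lift_cond k v23 h23) p
  have app31 : ∀ p, Δ31 (smk k p) = smk k (mkDerivation k v31 p) := fun p =>
    Derivation.liftOfSurjective_apply (smk_surj k) (lift_cond k v31 h31) p
  have e12x : Δ12 (sx k) = sy k := by
    rw [show sx k = smk k (X 0) from rfl, app12]; simp [hv12, mkDerivation_X]
  have e12y : Δ12 (sy k) = -(sx k) := by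
    rw [show sy k = smk k (X 1) from rfl, app12]; simp [hv12, mkDerivation_X]
  have e12z : Δ12 (sz k) = 0 := by
    rw [show sz k = smk k (X 2) from rfl, app12]; simp [hv12, mkDerivation_X]
  have e23x : Δ23 (sx k) = 0 := by
    rw [show sx k = smk k (X 0) from rfl, app23]; simp [hv23, mkDerivation_X]
  have e23y : Δ23 (sy k) = sz k := by
    rw [show sy k = smk k (X 1) from rfl, app23]; simp [hv23, mkDerivation_X]
  have e23z : Δ23 (sz k) = -(sy k) := by
    rw [show sz k = smk k (X 2) from rfl, app23]; simp [hv23, mkDerivation_X]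
  have e31x : Δ31 (sx k) = -(sz k) := by
    rw [show sx k = smk k (X 0) from rfl, app31]; simp [hv31, mkDerivation_X]
  have e31y : Δ31 (sy k) = 0 := by
    rw [show sy k = smk k (X 1) from rfl, app31]; simp [hv31, mkDerivation_X]
  have e31z : Δ31 (sz k) = sx k := by
    rw [show sz k = smk k (X 2) from rfl, app31]; simp [hv31, mkDerivation_X]
  refine ⟨Δ12, Δ23, Δ31, e12x, e12y, e12z, e23x, e23y, e23z, e31x, e31y, e31z, ?_⟩
  intro d
  set a := d (sx k) with ha
  set b := d (sy k) with hb
  set c := d (sz k) with hc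
  -- the tangency relation
  have hrel : sx k * a + sy k * b + sz k * c = 0 := by
    apply half_cancel
    have h0 : d ((sx k) ^ 2 + (sy k) ^ 2 + (sz k) ^ 2) = 0 := by
      rw [sphere_rel k, Derivation.map_one_eq_zero]
    simp only [map_add, Derivation.leibniz_pow, nsmul_eq_mul, Nat.cast_ofNat,
      smul_eq_mul, pow_one] at h0
    linear_combination h0
  refine ⟨a * sy k - b * sx k, b * sz k - c * sy k, c * sx k - a * sz k, ?_⟩
  apply Derivation.ext_of_adjoin_eq_top _ (sphere_adjoin k)
  intro u hu
  have hs := sphere_rel k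
  simp only [Set.mem_insert_iff, Set.mem_singleton_iff] at hu
  obtain rfl | rfl | rfl := hu <;>
    simp only [Derivation.add_apply, Derivation.smul_apply, smul_eq_mul]
  · rw [e12x, e23x, e31x, ← ha]
    linear_combination (sx k) * hrel - a * hs
  · rw [e12y, e23y, e31y, ← hb]
    linear_combination (sy k) * hrel - b * hs
  · rw [e12z, e23z, e31z, ← hc]
    linear_combination (sz k) * hrel - c * hs

end
end

section
/- Let k be a field of characteristic 0, A = k[x,y,z]/(x²+y²+z²−1), A_z the localization of A at the powers of z with canonical map ι : A → A_z, D_x and D_y the unique k-derivations of A_z with D_x(x)=1, D_x(y)=0, D_y(x)=0, D_y(y)=1, and for η ∈ Der_k(A) let η̃ be the unique k-derivation of A_z with η̃(ι(a)) = ι(η(a)) for all a ∈ A. Fix an integer n and set α = −2n·1_k; define T_η(g) = η̃(g) + (α/2)·(D_x(η̃(x)) + D_y(η̃(y)))·g for η ∈ Der_k(A), g ∈ A_z. Then the A-submodule zⁿ·ι(A) = { zⁿ·ι(a) : a ∈ A } of A_z satisfies T_η(zⁿ·ι(A)) ⊆ zⁿ·ι(A) for all η ∈ Der_k(A). -/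
set_option synthInstance.maxHeartbeats 1000000
set_option maxHeartbeats 1000000

open MvPolynomial

noncomputable section

lemma two_cancel_smul {k M : Type*} [Field k] [CharZero k] [AddCommMonoid M] [Module k M]
    {w : M} (h : w + w = 0) : w = 0 := by
  have h2 : (2 : k) • w = 0 := by rw [two_smul]; exact h
  calc w = ((2 : k)⁻¹ * 2) • w := by norm_num
    _ = (2 : k)⁻¹ • ((2 : k) • w) := by rw [mul_smul]
    _ = 0 := by rw [h2, smul_zero]

lemma deriv_unit_zpow {k Az : Type*} [CommSemiring k] [CommRing Az] [Algebra k Az]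
    (D : Derivation k Az Az) (u : Azˣ) (n : ℤ) :
    (u : Az) * D ((u ^ n : Azˣ) : Az) = (n : Az) * (((u ^ n : Azˣ) : Az) * D (u : Az)) := by
  have hnat : ∀ m : ℕ, (u : Az) * D ((u ^ m : Azˣ) : Az)
      = (m : Az) * (((u ^ m : Azˣ) : Az) * D (u : Az)) := by
    intro m
    induction m with
    | zero => simp
    | succ m ih =>
      have hc : ((u ^ (m + 1) : Azˣ) : Az) = ((u ^ m : Azˣ) : Az) * (u : Az) := by
        rw [pow_succ]; rfl
      rw [hc, D.leibniz, smul_eq_mul, smul_eq_mul]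
      push_cast at ih ⊢
      linear_combination (u : Az) * ih
  rcases n with m | m
  · simpa using hnat m
  · set a : Az := ((u ^ (Int.negSucc m) : Azˣ) : Az) with ha
    set b : Az := ((u ^ (m + 1) : Azˣ) : Az) with hb
    have hab : a * b = 1 := by
      rw [ha, hb, ← Units.val_mul, zpow_negSucc]
      simp
    have hD : a * D b + b * D a = 0 := by
      have := D.leibniz a b
      rw [smul_eq_mul, smul_eq_mul] at this
      rw [← this, hab]
      simp
    have h3 := hnat (m + 1)
    rw [← hb] at h3
    have hcast : ((Int.negSucc m : ℤ) : Az) = -((m : Az) + 1) := by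
      rw [Int.negSucc_eq]; push_cast; ring
    rw [hcast]
    push_cast at h3
    linear_combination ((u : Az) * a) * hD - a ^ 2 * h3
      - ((u : Az) * D a - ((m : Az) + 1) * a * D (u : Az)) * hab
      - (2 * a * ((m : Az) + 1) * D (u : Az)) * hab

lemma deriv_chain {k Az : Type*} [CommSemiring k] [CommRing Az] [Algebra k Az]
    (D : Derivation k Az Az) (φ : MvPolynomial (Fin 3) k →ₐ[k] Az)
    (p : MvPolynomial (Fin 3) k) :
    D (φ p) = ∑ i : Fin 3, φ (pderiv i p) * D (φ (X i)) := by
  induction p using MvPolynomial.induction_on with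
  | C a => simp
  | add p q hp hq =>
    simp only [map_add, hp, hq, add_mul, ← Finset.sum_add_distrib]
  | mul_X p i hp =>
    classical
    rw [map_mul, D.leibniz, smul_eq_mul, smul_eq_mul, hp, Finset.mul_sum]
    have key : ∀ j : Fin 3, φ (pderiv j (p * X i)) * D (φ (X j))
        = φ (X i) * (φ (pderiv j p) * D (φ (X j)))
          + (if j = i then φ p * D (φ (X i)) else 0) := by
      intro j
      rw [pderiv_mul, pderiv_X, map_add, map_mul, map_mul]
      by_cases hji : j = i
      · subst hji; simp only [Pi.single_eq_same, map_one, if_true, mul_one]; ring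
      · simp only [hji, if_false, Pi.single_eq_of_ne (Ne.symm hji), map_zero, mul_zero,
          zero_mul, add_zero]
        ring
    have hsum : ∑ j : Fin 3, φ (pderiv j (p * X i)) * D (φ (X j))
        = ∑ j : Fin 3, (φ (X i) * (φ (pderiv j p) * D (φ (X j)))
          + if j = i then φ p * D (φ (X i)) else 0) :=
      Finset.sum_congr rfl fun j _ => key j
    rw [hsum, Finset.sum_add_distrib, Finset.sum_ite_eq', if_pos (Finset.mem_univ i)]
    ring

/-- For `α = -2n` with `n ∈ ℤ`, the `A`-submodule `zⁿ · ι(A)` of the localization `Az` of the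
coordinate ring of the sphere away from `z` is invariant under the twisted action
`T_η g = η̃ g + (α/2) (D_x(η̃ x) + D_y(η̃ y)) g` of the vector fields.  Here `u` is the unit
of `Az` given by the image of `z`, so `↑(u ^ n)` is the `n`-th power `zⁿ`. -/
theorem sphere_rank_one_submodule_invariant
    (k : Type*) [Field k] [CharZero k]
    (Az : Type*) [CommRing Az] [Algebra (SphereRing k) Az]
    [IsLocalization.Away (sz k) Az] [Algebra k Az] [IsScalarTower k (SphereRing k) Az]
    (Dx Dy : Derivation k Az Az)
    (hDxx : Dx (algebraMap (SphereRing k) Az (sx k)) = 1)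
    (hDxy : Dx (algebraMap (SphereRing k) Az (sy k)) = 0)
    (hDyx : Dy (algebraMap (SphereRing k) Az (sx k)) = 0)
    (hDyy : Dy (algebraMap (SphereRing k) Az (sy k)) = 1)
    (ext : Derivation k (SphereRing k) (SphereRing k) → Derivation k Az Az)
    (hext : ∀ (η : Derivation k (SphereRing k) (SphereRing k)) (a : SphereRing k),
      ext η (algebraMap (SphereRing k) Az a) = algebraMap (SphereRing k) Az (η a))
    (n : ℤ) (α : k) (hα : α = ((-2 * n : ℤ) : k))
    (u : Azˣ) (hu : (u : Az) = algebraMap (SphereRing k) Az (sz k)) :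
    ∀ (η : Derivation k (SphereRing k) (SphereRing k)) (a : SphereRing k),
      ∃ b : SphereRing k,
        ext η (((u ^ n : Azˣ) : Az) * algebraMap (SphereRing k) Az a) + (α / 2) •
          ((Dx (ext η (algebraMap (SphereRing k) Az (sx k))) +
            Dy (ext η (algebraMap (SphereRing k) Az (sy k)))) *
              (((u ^ n : Azˣ) : Az) * algebraMap (SphereRing k) Az a)) =
        ((u ^ n : Azˣ) : Az) * algebraMap (SphereRing k) Az b := by
  intro η a
  set I : Ideal (MvPolynomial (Fin 3) k) :=
    Ideal.span {(X 0 ^ 2 + X 1 ^ 2 + X 2 ^ 2 - 1 : MvPolynomial (Fin 3) k)} with hI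
  set φ : MvPolynomial (Fin 3) k →ₐ[k] Az :=
    (IsScalarTower.toAlgHom k (SphereRing k) Az).comp (Ideal.Quotient.mkₐ k I) with hφdef
  have hφ : ∀ p : MvPolynomial (Fin 3) k,
      φ p = algebraMap (SphereRing k) Az (Ideal.Quotient.mk I p) := fun p => rfl
  -- representatives
  obtain ⟨F, hF⟩ := Ideal.Quotient.mk_surjective (I := I) (η (sx k))
  obtain ⟨G, hG⟩ := Ideal.Quotient.mk_surjective (I := I) (η (sy k))
  obtain ⟨H, hH⟩ := Ideal.Quotient.mk_surjective (I := I) (η (sz k))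
  -- the sphere relation in A
  have hmk0 : Ideal.Quotient.mk I (X 0 ^ 2 + X 1 ^ 2 + X 2 ^ 2 - 1 : MvPolynomial (Fin 3) k)
      = 0 :=
    Ideal.Quotient.eq_zero_iff_mem.mpr (Ideal.subset_span (Set.mem_singleton _))
  have hrelA : sx k * sx k + sy k * sy k + sz k * sz k = 1 := by
    rw [map_sub, map_add, map_add, map_pow, map_pow, map_pow, map_one, sub_eq_zero] at hmk0
    linear_combination hmk0
  -- x f + y g + z h = 0 in A
  have hsum : (sx k * η (sx k) + sy k * η (sy k) + sz k * η (sz k))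
      + (sx k * η (sx k) + sy k * η (sy k) + sz k * η (sz k)) = 0 := by
    have h0 : η (sx k * sx k + sy k * sy k + sz k * sz k) = 0 := by
      rw [hrelA]; exact η.map_one_eq_zero
    simp only [map_add, Derivation.leibniz, smul_eq_mul] at h0
    linear_combination h0
  have hs : sx k * η (sx k) + sy k * η (sy k) + sz k * η (sz k) = 0 :=
    two_cancel_smul (k := k) hsum
  -- polynomial relation
  have hmem : X 0 * F + X 1 * G + X 2 * H ∈ I := by
    refine Ideal.Quotient.eq_zero_iff_mem.mp ?_
    rw [map_add, map_add, map_mul, map_mul, map_mul, hF, hG, hH]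
    exact hs
  rw [hI, Ideal.mem_span_singleton] at hmem
  obtain ⟨W, hW⟩ := hmem
  have hW' : X 0 * F + X 1 * G + X 2 * H
      = (X 0 * X 0 + X 1 * X 1 + X 2 * X 2 - 1) * W := by
    rw [hW]; ring
  -- differentiate the polynomial relation and map into Az
  have hd : (pderiv (2 : Fin 3)) (X 0 * F + X 1 * G + X 2 * H)
      = (pderiv (2 : Fin 3)) ((X 0 * X 0 + X 1 * X 1 + X 2 * X 2 - 1) * W) := by
    rw [hW']
  simp only [map_add, map_sub, pderiv_mul, pderiv_X_self,
    pderiv_X_of_ne (show (0 : Fin 3) ≠ 2 by decide),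
    pderiv_X_of_ne (show (1 : Fin 3) ≠ 2 by decide), pderiv_one,
    zero_mul, mul_zero, zero_add, add_zero, one_mul, mul_one, zero_sub, sub_zero] at hd
  -- map the differentiated relation into Az
  have hd2 := congrArg φ hd
  simp only [map_add, map_mul, map_sub, map_one] at hd2
  have hφ0 : φ (X 0) = algebraMap (SphereRing k) Az (sx k) := rfl
  have hφ1 : φ (X 1) = algebraMap (SphereRing k) Az (sy k) := rfl
  have hφ2 : φ (X 2) = algebraMap (SphereRing k) Az (sz k) := rfl
  have hφF : φ F = algebraMap (SphereRing k) Az (η (sx k)) := by rw [hφ, hF]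
  have hφG : φ G = algebraMap (SphereRing k) Az (η (sy k)) := by rw [hφ, hG]
  have hφH : φ H = algebraMap (SphereRing k) Az (η (sz k)) := by rw [hφ, hH]
  -- the sphere relation in Az
  have hrelAz : algebraMap (SphereRing k) Az (sx k) * algebraMap (SphereRing k) Az (sx k)
      + algebraMap (SphereRing k) Az (sy k) * algebraMap (SphereRing k) Az (sy k)
      + algebraMap (SphereRing k) Az (sz k) * algebraMap (SphereRing k) Az (sz k) = 1 := by
    have h1 := congrArg (algebraMap (SphereRing k) Az) hrelA
    rwa [map_add, map_add, map_mul, map_mul, map_mul, map_one] at h1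
  have hkey : algebraMap (SphereRing k) Az (sx k) * φ (pderiv 2 F)
      + algebraMap (SphereRing k) Az (sy k) * φ (pderiv 2 G)
      + algebraMap (SphereRing k) Az (η (sz k))
      + algebraMap (SphereRing k) Az (sz k) * φ (pderiv 2 H)
      = 2 * (algebraMap (SphereRing k) Az (sz k) * φ W) := by
    rw [hφ0, hφ1, hφ2, hφH] at hd2
    linear_combination hd2 + (φ (pderiv 2 W)) * hrelAz
  -- derivatives of z in Az
  have hDxz : algebraMap (SphereRing k) Az (sx k)
      + algebraMap (SphereRing k) Az (sz k) * Dx (algebraMap (SphereRing k) Az (sz k)) = 0 := by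
    have h0 : Dx (algebraMap (SphereRing k) Az (sx k) * algebraMap (SphereRing k) Az (sx k)
        + algebraMap (SphereRing k) Az (sy k) * algebraMap (SphereRing k) Az (sy k)
        + algebraMap (SphereRing k) Az (sz k) * algebraMap (SphereRing k) Az (sz k)) = 0 := by
      rw [hrelAz]; exact Dx.map_one_eq_zero
    simp only [map_add, Derivation.leibniz, smul_eq_mul, hDxx, hDxy] at h0
    exact two_cancel_smul (k := k) (by linear_combination h0)
  have hDyz : algebraMap (SphereRing k) Az (sy k)
      + algebraMap (SphereRing k) Az (sz k) * Dy (algebraMap (SphereRing k) Az (sz k)) = 0 := by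
    have h0 : Dy (algebraMap (SphereRing k) Az (sx k) * algebraMap (SphereRing k) Az (sx k)
        + algebraMap (SphereRing k) Az (sy k) * algebraMap (SphereRing k) Az (sy k)
        + algebraMap (SphereRing k) Az (sz k) * algebraMap (SphereRing k) Az (sz k)) = 0 := by
      rw [hrelAz]; exact Dy.map_one_eq_zero
    simp only [map_add, Derivation.leibniz, smul_eq_mul, hDyx, hDyy] at h0
    exact two_cancel_smul (k := k) (by linear_combination h0)
  -- chain rule for Dx (η x) and Dy (η y)
  have hDxf := deriv_chain Dx φ F
  rw [Fin.sum_univ_three, hφ0, hφ1, hφ2, hφF, hDxx, hDxy] at hDxf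
  have hDyg := deriv_chain Dy φ G
  rw [Fin.sum_univ_three, hφ0, hφ1, hφ2, hφG, hDyx, hDyy] at hDyg
  -- Leibniz for the product and the zpow of the unit
  have hlv := (ext η).leibniz (((u ^ n : Azˣ)) : Az) (algebraMap (SphereRing k) Az a)
  rw [smul_eq_mul, smul_eq_mul, hext η a] at hlv
  have hzp := deriv_unit_zpow (ext η) u n
  rw [hu, hext η (sz k)] at hzp
  -- the scalar
  have hαs : ∀ w : Az, (α / 2) • w = -((n : Az) * w) := by
    intro w
    have h1 : α / 2 = ((-n : ℤ) : k) := by rw [hα]; push_cast; ring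
    rw [h1, Algebra.smul_def, map_intCast]
    push_cast; ring
  -- the element b
  refine ⟨η a + (n : ℤ) • (Ideal.Quotient.mk I
      (2 * W - pderiv 2 H - pderiv 0 F - pderiv 1 G) * a), ?_⟩
  have hb : algebraMap (SphereRing k) Az (η a + (n : ℤ) • (Ideal.Quotient.mk I
        (2 * W - pderiv 2 H - pderiv 0 F - pderiv 1 G) * a))
      = algebraMap (SphereRing k) Az (η a) + (n : Az) *
        ((2 * φ W - φ (pderiv 2 H) - φ (pderiv 0 F) - φ (pderiv 1 G))
          * algebraMap (SphereRing k) Az a) := by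
    rw [map_add, map_zsmul, zsmul_eq_mul, map_mul, ← hφ, map_sub, map_sub, map_sub,
      map_mul, map_ofNat]
  rw [← Units.mul_right_inj u, hu, hb, hlv, hext η (sx k), hext η (sy k), hαs]
  linear_combination (algebraMap (SphereRing k) Az a) * hzp
    - ((n : Az) * algebraMap (SphereRing k) Az (sz k) * ((u ^ n : Azˣ) : Az)
        * algebraMap (SphereRing k) Az a) * hDxf
    - ((n : Az) * algebraMap (SphereRing k) Az (sz k) * ((u ^ n : Azˣ) : Az)
        * algebraMap (SphereRing k) Az a) * hDyg
    - ((n : Az) * ((u ^ n : Azˣ) : Az) * algebraMap (SphereRing k) Az a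
        * φ (pderiv 2 F)) * hDxz
    - ((n : Az) * ((u ^ n : Azˣ) : Az) * algebraMap (SphereRing k) Az a
        * φ (pderiv 2 G)) * hDyz
    + ((n : Az) * ((u ^ n : Azˣ) : Az) * algebraMap (SphereRing k) Az a) * hkey

end
end
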